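/- arXiv:math/0104032 — 2 statements merged into one kernel-verified Lean document; each statement's English description precedes it below -/
import Mathlib

section
/- Let x ∈ Λ_I ⊂ Λ̄ and a = a_{ij} with both i, j ∈ I, and let b = b_{ij} be the corresponding root of Λ_I. Then for every s ∈ ℝ, the intersection of Λ_I with the closure in Λ̄ of { z ∈ Λ : a(z) ≥ s } equals { x ∈ Λ_I : b(x) ≥ s }; consequently f_x(a) = −b(x), and f_x(a) = −a(z) for any z ∈ Λ with r_I(z) = x. -/
open Set Pointwise Topology Filter

namespace CompApp

variable {n : ℕ}

/-- The component `Λ_I`: the quotient of the functions `I → ℝ` by the line of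
constants (so `Λ_I = Σ_{i∈I} ℝ η_i^I` with the relation `Σ_{i∈I} η_i^I = 0`). -/
abbrev Comp (I : Finset (Fin n)) : Type :=
  (↥I → ℝ) ⧸ (Submodule.span ℝ {(1 : ↥I → ℝ)})

/-- quotient map onto a component -/
noncomputable def mkC (I : Finset (Fin n)) : (↥I → ℝ) →ₗ[ℝ] Comp I :=
  Submodule.mkQ _

/-- The apartment `Λ` itself, i.e. the component for `I = {1,…,n}`. -/
abbrev Apt (n : ℕ) : Type := Comp (Finset.univ : Finset (Fin n))

/-- restriction of functions from `{1,…,n}` to `J` -/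
def resL (J : Finset (Fin n)) :
    ((↥(Finset.univ : Finset (Fin n)) → ℝ)) →ₗ[ℝ] (↥J → ℝ) :=
  LinearMap.funLeft ℝ ℝ (fun j => ⟨j.1, Finset.mem_univ _⟩)

/-- The projection `r_J : Λ → Λ_J`, `Σ x_i η_i ↦ Σ_{i∈J} x_i η_i^J`. -/
noncomputable def resQ (J : Finset (Fin n)) : Apt n →ₗ[ℝ] Comp J :=
  Submodule.mapQ _ _ (resL J) (by
    rw [Submodule.span_le]
    intro x hx
    rw [Set.mem_singleton_iff] at hx
    subst hx
    exact Submodule.mem_comap.mpr (Submodule.subset_span rfl))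

variable [NeZero n]

/-- The compactified apartment `Λ̄ = ⋃_{∅≠I⊆{1,…,n}} Λ_I` as a set. -/
def CApt (n : ℕ) : Type := Σ I : {I : Finset (Fin n) // I.Nonempty}, Comp I.1

/-- The embedding `Λ ↪ Λ̄`. -/
def emb (z : Apt n) : CApt n := ⟨⟨Finset.univ, Finset.univ_nonempty⟩, z⟩

/-- The point of the boundary component `Λ_I` inside `Λ̄`. -/
def embC (I : Finset (Fin n)) (hI : I.Nonempty) (y : Comp I) : CApt n := ⟨⟨I, hI⟩, y⟩

/-- The cone `D_I = Σ_{i∉I} ℝ_{≥0}(−η_i) ⊆ Λ`. -/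
noncomputable def cone (I : Finset (Fin n)) : Set (Apt n) :=
  (mkC _) '' {x | (∀ l : ↥(Finset.univ : Finset (Fin n)), (l : Fin n) ∈ I → x l = 0) ∧
    ∀ l : ↥(Finset.univ : Finset (Fin n)), (l : Fin n) ∉ I → x l ≤ 0}

/-- The basic open set `C_U^I = ⋃_{I ⊆ J} r_J(U + D_I) ⊆ Λ̄`. -/
noncomputable def CUI (U : Set (Apt n)) (I : Finset (Fin n)) : Set (CApt n) :=
  {p | I ⊆ p.1.1 ∧ p.2 ∈ resQ p.1.1 '' (U + cone I)}

/-- Boundedness for subsets of the apartment `Λ`. -/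
def BoundedA (U : Set (Apt n)) : Prop :=
  ∃ t : Set (↥(Finset.univ : Finset (Fin n)) → ℝ),
    Bornology.IsBounded t ∧ U ⊆ (mkC _) '' t

/-- The topology of `Λ̄`: generated by the open subsets of `Λ` together with the
sets `C_U^I` for nonempty proper `I` and bounded open `U ⊆ Λ`. -/
noncomputable instance : TopologicalSpace (CApt n) :=
  TopologicalSpace.generateFrom
    ({s | ∃ U : Set (Apt n), IsOpen U ∧ s = emb '' U} ∪
     {s | ∃ (U : Set (Apt n)) (I : Finset (Fin n)), I.Nonempty ∧ I ≠ Finset.univ ∧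
        IsOpen U ∧ BoundedA U ∧ s = CUI U I})

/-- The root `a_{ij} = χ_i − χ_j` as a linear functional on `Λ`. -/
noncomputable def aFun (i j : Fin n) : Apt n →ₗ[ℝ] ℝ :=
  Submodule.liftQ _
    (LinearMap.proj (⟨i, Finset.mem_univ i⟩ : ↥(Finset.univ : Finset (Fin n))) -
      LinearMap.proj ⟨j, Finset.mem_univ j⟩) (by
    rw [Submodule.span_le]
    intro x hx
    rw [Set.mem_singleton_iff] at hx
    subst hx
    simp [LinearMap.mem_ker])

/-- The root `b_{ij}` of the component `Λ_I` (for `i, j ∈ I`). -/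
noncomputable def bFun (I : Finset (Fin n)) (i j : ↥I) : Comp I →ₗ[ℝ] ℝ :=
  Submodule.liftQ _
    (LinearMap.proj (R := ℝ) (φ := fun _ : ↥I => ℝ) i -
      LinearMap.proj (R := ℝ) (φ := fun _ : ↥I => ℝ) j) (by
    rw [Submodule.span_le]
    intro x hx
    rw [Set.mem_singleton_iff] at hx
    subst hx
    simp [LinearMap.mem_ker])

/-- The closure in `Λ̄` of the half-space `{ z ∈ Λ : a_{ij}(z) ≥ s }`. -/
noncomputable def halfCl (i j : Fin n) (s : ℝ) : Set (CApt n) :=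
  closure (emb '' {z : Apt n | s ≤ aFun i j z})

/-- `f_Ω(a) = inf{ t : Ω ⊆ closure{ z ∈ Λ : a(z) ≥ −t } } ∈ ℝ ∪ {±∞}`,
for `a = a_{ij}` (with `inf ∅ = +∞`). -/
noncomputable def fO (Ω : Set (CApt n)) (i j : Fin n) : EReal :=
  sInf {t : EReal | ∃ s : ℝ, t = (s : EReal) ∧ Ω ⊆ halfCl i j (-s)}

end CompApp

/-!
A point `y ∈ Λ_I` is the limit in `Λ̄`, as `t → ∞`, of the points of `Λ` whose coordinates
are those of `y` on `I` and `-t` off `I`; along this path `a_{ij}` is constantly `b_{ij}(y)`,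
so `b_{ij}(y) ≥ s` puts `y` in the closure of `{a_{ij} ≥ s}`. Conversely, if `b_{ij}(y) < s`,
a small bounded open `U ⊆ Λ` around a lift of `y` on which `a_{ij} < s` gives the basic
neighbourhood `C_U^I` of `y` (or `U` itself when `I = {1,…,n}`), which meets `Λ` inside
`U + D_I`; there `a_{ij} < s` still, because `a_{ij}` vanishes on `D_I` when `i, j ∈ I`.
The values of `f_y(a)` follow, since `y ∈ closure {a_{ij} ≥ -t}` exactly when `t ≥ -b_{ij}(y)`.
-/

namespace CompApp

variable {n : ℕ}

lemma mkC_surjective (I : Finset (Fin n)) : Function.Surjective (mkC I) :=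
  Submodule.mkQ_surjective _

@[simp]
lemma resQ_mkC (J : Finset (Fin n)) (g : ↥(Finset.univ : Finset (Fin n)) → ℝ) :
    resQ J (mkC _ g) = mkC J (resL J g) := rfl

@[simp]
lemma aFun_mkC (i j : Fin n) (g : ↥(Finset.univ : Finset (Fin n)) → ℝ) :
    aFun i j (mkC _ g) = g ⟨i, Finset.mem_univ i⟩ - g ⟨j, Finset.mem_univ j⟩ := rfl

lemma resQ_univ (z : Apt n) : resQ Finset.univ z = z := by
  obtain ⟨g, rfl⟩ := mkC_surjective _ z
  rfl

lemma aFun_eq_bFun_resQ {I : Finset (Fin n)} {i j : Fin n} (hiI : i ∈ I) (hjI : j ∈ I)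
    (z : Apt n) : aFun i j z = bFun I ⟨i, hiI⟩ ⟨j, hjI⟩ (resQ I z) := by
  obtain ⟨g, rfl⟩ := mkC_surjective _ z
  rfl

def extendOutside (I : Finset (Fin n)) (h : ↥I → ℝ) (c : ℝ) :
    ↥(Finset.univ : Finset (Fin n)) → ℝ :=
  fun l => if hl : (l : Fin n) ∈ I then h ⟨l, hl⟩ else c

@[simp]
lemma resL_extendOutside (I : Finset (Fin n)) (h : ↥I → ℝ) (c : ℝ) :
    resL I (extendOutside I h c) = h := by
  funext l
  exact dif_pos l.2

lemma resQ_surjective (I : Finset (Fin n)) : Function.Surjective (resQ I) := by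
  intro y
  obtain ⟨h, rfl⟩ := mkC_surjective I y
  exact ⟨mkC _ (extendOutside I h 0), by simp⟩

lemma zero_mem_cone (I : Finset (Fin n)) : (0 : Apt n) ∈ cone I :=
  ⟨0, ⟨fun _ _ => rfl, fun _ _ => le_rfl⟩, map_zero _⟩

lemma add_mem_cone {I : Finset (Fin n)} {d e : Apt n} (hd : d ∈ cone I) (he : e ∈ cone I) :
    d + e ∈ cone I := by
  obtain ⟨x, ⟨hx₀, hx⟩, rfl⟩ := hd
  obtain ⟨y, ⟨hy₀, hy⟩, rfl⟩ := he
  refine ⟨x + y, ⟨fun l hl => ?_, fun l hl => ?_⟩, map_add _ x y⟩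
  · simp [hx₀ l hl, hy₀ l hl]
  · simpa using add_nonpos (hx l hl) (hy l hl)

lemma cone_anti {I J : Finset (Fin n)} (hIJ : I ⊆ J) : cone J ⊆ cone I := by
  rintro _ ⟨x, ⟨hx₀, hx⟩, rfl⟩
  refine ⟨x, ⟨fun l hl => hx₀ l (hIJ hl), fun l _ => ?_⟩, rfl⟩
  by_cases hl : (l : Fin n) ∈ J
  · exact (hx₀ l hl).le
  · exact hx l hl

lemma aFun_eq_zero_of_mem_cone {I : Finset (Fin n)} {i j : Fin n} (hiI : i ∈ I) (hjI : j ∈ I)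
    {d : Apt n} (hd : d ∈ cone I) : aFun i j d = 0 := by
  obtain ⟨x, ⟨hx₀, -⟩, rfl⟩ := hd
  simp [hx₀ ⟨i, Finset.mem_univ i⟩ hiI, hx₀ ⟨j, Finset.mem_univ j⟩ hjI]

lemma eventually_mkC_extendOutside_sub_mem_cone {I : Finset (Fin n)} {h : ↥I → ℝ}
    {w : Apt n} (hw : resQ I w = mkC I h) :
    ∀ᶠ t in atTop, mkC _ (extendOutside I h (-t)) - w ∈ cone I := by
  obtain ⟨w₀, rfl⟩ := mkC_surjective _ w
  obtain ⟨c, hc⟩ : ∃ c : ℝ, c • (1 : ↥I → ℝ) = resL I w₀ - h :=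
    Submodule.mem_span_singleton.mp ((Submodule.Quotient.eq _).mp hw)
  have hconst : mkC _ (c • (1 : ↥(Finset.univ : Finset (Fin n)) → ℝ)) = 0 :=
    (Submodule.Quotient.mk_eq_zero _).mpr
      (Submodule.smul_mem _ _ (Submodule.subset_span rfl))
  filter_upwards [eventually_all.mpr fun l : ↥(Finset.univ : Finset (Fin n)) =>
    eventually_ge_atTop (c - w₀ l)] with t ht
  refine ⟨extendOutside I h (-t) - w₀ + c • 1, ⟨fun l hl => ?_, fun l hl => ?_⟩, ?_⟩
  · have hcl : c = w₀ l - h ⟨l, hl⟩ := by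
      simpa [resL] using congrFun hc ⟨l, hl⟩
    simp only [Pi.add_apply, Pi.sub_apply, Pi.smul_apply, Pi.one_apply, smul_eq_mul,
      mul_one, extendOutside, dif_pos hl]
    linarith
  · simp only [Pi.add_apply, Pi.sub_apply, Pi.smul_apply, Pi.one_apply, smul_eq_mul,
      mul_one, extendOutside, dif_neg hl]
    linarith [ht l]
  · rw [map_add, hconst, add_zero, map_sub]

variable [NeZero n]

lemma emb_injective : Function.Injective (emb (n := n)) := fun _ _ h =>
  eq_of_heq (Sigma.mk.inj_iff.mp h).2

lemma emb_mem_CUI_iff {U : Set (Apt n)} {I : Finset (Fin n)} {z : Apt n} :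
    emb z ∈ CUI U I ↔ z ∈ U + cone I := by
  have hid : (resQ Finset.univ : Apt n → Apt n) = id := funext resQ_univ
  change I ⊆ Finset.univ ∧ z ∈ resQ Finset.univ '' (U + cone I) ↔ _
  rw [hid, Set.image_id]
  exact and_iff_right (Finset.subset_univ I)

theorem tendsto_emb_extendOutside (I : Finset (Fin n)) (hI : I.Nonempty) (h : ↥I → ℝ) :
    Tendsto (fun t : ℝ => emb (mkC _ (extendOutside I h (-t)))) atTop
      (𝓝 (embC I hI (mkC I h))) := by
  refine TopologicalSpace.tendsto_nhds_generateFrom_iff.mpr ?_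
  rintro O (⟨U, -, rfl⟩ | ⟨U, I', -, -, -, -, rfl⟩) hO
  · obtain ⟨u, hu, hue⟩ := hO
    obtain rfl : Finset.univ = I := congrArg (fun p : CApt n => p.1.1) hue
    obtain rfl : u = mkC _ h := eq_of_heq (Sigma.mk.inj_iff.mp hue).2
    refine Eventually.of_forall fun t => ⟨_, hu, ?_⟩
    change _ = emb _
    rw [← resQ_univ (mkC _ (extendOutside _ h (-t))), resQ_mkC, resL_extendOutside]
  · obtain ⟨hI'I, w, ⟨u, hu, d, hd, rfl⟩, hw⟩ := hO
    filter_upwards [eventually_mkC_extendOutside_sub_mem_cone hw] with t ht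
    refine emb_mem_CUI_iff.mpr ⟨u, hu, d + (mkC _ (extendOutside I h (-t)) - (u + d)),
      add_mem_cone hd (cone_anti hI'I ht), by
        change u + (d + _) = _
        rw [← add_assoc, add_sub_cancel]⟩

lemma embC_mem_halfCl_of_le {I : Finset (Fin n)} (hI : I.Nonempty) {i j : Fin n}
    (hiI : i ∈ I) (hjI : j ∈ I) {y : Comp I} {s : ℝ}
    (hs : s ≤ bFun I ⟨i, hiI⟩ ⟨j, hjI⟩ y) : embC I hI y ∈ halfCl i j s := by
  obtain ⟨h, rfl⟩ := mkC_surjective I y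
  refine mem_closure_of_tendsto (tendsto_emb_extendOutside I hI h)
    (Eventually.of_forall fun t => Set.mem_image_of_mem _ ?_)
  rwa [Set.mem_ofPred_eq, aFun_eq_bFun_resQ hiI hjI, resQ_mkC, resL_extendOutside]

lemma exists_isOpen_embC_resQ_mem {U : Set (Apt n)} (hU : IsOpen U) (hUb : BoundedA U)
    {w : Apt n} (hw : w ∈ U) (I : Finset (Fin n)) (hI : I.Nonempty) :
    ∃ O : Set (CApt n), IsOpen O ∧ embC I hI (resQ I w) ∈ O ∧ emb ⁻¹' O ⊆ U + cone I := by
  by_cases hIu : I = Finset.univ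
  · subst hIu
    refine ⟨emb '' U, TopologicalSpace.isOpen_generateFrom_of_mem (.inl ⟨U, hU, rfl⟩),
      ⟨w, hw, by rw [resQ_univ]; rfl⟩, ?_⟩
    rintro z ⟨u, hu, huz⟩
    obtain rfl := emb_injective huz
    exact ⟨_, hu, 0, zero_mem_cone _, add_zero _⟩
  · refine ⟨CUI U I,
      TopologicalSpace.isOpen_generateFrom_of_mem (.inr ⟨U, I, hI, hIu, hU, hUb, rfl⟩),
      ⟨subset_rfl, w, ⟨w, hw, 0, zero_mem_cone _, add_zero w⟩, rfl⟩,
      fun z hz => emb_mem_CUI_iff.mp hz⟩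

lemma le_of_embC_mem_halfCl {I : Finset (Fin n)} (hI : I.Nonempty) {i j : Fin n}
    (hiI : i ∈ I) (hjI : j ∈ I) {y : Comp I} {s : ℝ}
    (hy : embC I hI y ∈ halfCl i j s) : s ≤ bFun I ⟨i, hiI⟩ ⟨j, hjI⟩ y := by
  by_contra! hlt
  obtain ⟨w, rfl⟩ := resQ_surjective I y
  obtain ⟨w₀, rfl⟩ := mkC_surjective _ w
  set U : Set (Apt n) := mkC _ '' (Metric.ball w₀ 1 ∩ {g | aFun i j (mkC _ g) < s})
  have hUo : IsOpen U := Submodule.isOpenMap_mkQ _ _ <|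
    Metric.isOpen_ball.inter (isOpen_lt (by simp only [aFun_mkC]; fun_prop) continuous_const)
  have hUb : BoundedA U := ⟨_, Metric.isBounded_ball, Set.image_mono Set.inter_subset_left⟩
  have hwU : mkC _ w₀ ∈ U :=
    ⟨w₀, ⟨Metric.mem_ball_self one_pos, by rwa [Set.mem_ofPred_eq, aFun_eq_bFun_resQ hiI hjI]⟩,
      rfl⟩
  obtain ⟨O, hO, hyO, hOU⟩ := exists_isOpen_embC_resQ_mem hUo hUb hwU I hI
  obtain ⟨_, hzO, z, hz, rfl⟩ := mem_closure_iff.mp hy O hO hyO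
  obtain ⟨_, ⟨g, ⟨-, hg⟩, rfl⟩, d, hd, rfl⟩ := hOU hzO
  have had : aFun i j d = 0 := aFun_eq_zero_of_mem_cone hiI hjI hd
  simp only [Set.mem_ofPred_eq, map_add, had, add_zero] at hz hg
  linarith

lemma embC_mem_halfCl_iff {I : Finset (Fin n)} (hI : I.Nonempty) {i j : Fin n}
    (hiI : i ∈ I) (hjI : j ∈ I) (y : Comp I) (s : ℝ) :
    embC I hI y ∈ halfCl i j s ↔ s ≤ bFun I ⟨i, hiI⟩ ⟨j, hjI⟩ y :=
  ⟨le_of_embC_mem_halfCl hI hiI hjI, embC_mem_halfCl_of_le hI hiI hjI⟩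

lemma fO_singleton_of_mem_halfCl_iff {p : CApt n} {i j : Fin n} {c : ℝ}
    (hp : ∀ s, p ∈ halfCl i j s ↔ s ≤ c) : fO {p} i j = ((-c : ℝ) : EReal) := by
  refine IsLeast.csInf_eq ⟨⟨-c, rfl, ?_⟩, ?_⟩
  · simp [hp]
  · rintro _ ⟨s, rfl, hs⟩
    have : -s ≤ c := (hp _).mp (Set.singleton_subset_iff.mp hs)
    exact EReal.coe_le_coe_iff.mpr (by linarith)

theorem halfCl_inter_component_general {n : ℕ} [NeZero n]
    (I : Finset (Fin n)) (hI : I.Nonempty)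
    (i j : Fin n) (hiI : i ∈ I) (hjI : j ∈ I) :
    (∀ s : ℝ, halfCl i j s ∩ Set.range (embC I hI) =
        embC I hI '' {y : Comp I | s ≤ bFun I ⟨i, hiI⟩ ⟨j, hjI⟩ y}) ∧
    (∀ y : Comp I,
        fO {embC I hI y} i j = ((-(bFun I ⟨i, hiI⟩ ⟨j, hjI⟩ y) : ℝ) : EReal)) ∧
    (∀ (y : Comp I) (z : Apt n), resQ I z = y →
        fO {embC I hI y} i j = ((-(aFun i j z) : ℝ) : EReal)) := by
  have hfO (y : Comp I) :
      fO {embC I hI y} i j = ((-(bFun I ⟨i, hiI⟩ ⟨j, hjI⟩ y) : ℝ) : EReal) :=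
    fO_singleton_of_mem_halfCl_iff (embC_mem_halfCl_iff hI hiI hjI y)
  refine ⟨fun s => ?_, hfO, ?_⟩
  · ext p
    constructor
    · rintro ⟨hp, y, rfl⟩
      exact ⟨y, (embC_mem_halfCl_iff hI hiI hjI y s).mp hp, rfl⟩
    · rintro ⟨y, hy, rfl⟩
      exact ⟨(embC_mem_halfCl_iff hI hiI hjI y s).mpr hy, y, rfl⟩
  · rintro y z rfl
    rw [hfO, aFun_eq_bFun_resQ hiI hjI]

/-- Let `x ∈ Λ_I ⊂ Λ̄` and `a = a_{ij}` with both `i, j ∈ I`, and let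
`b = b_{ij}` be the corresponding root of `Λ_I`.  Then for every `s ∈ ℝ` the
intersection of `Λ_I` with the closure in `Λ̄` of `{ z ∈ Λ : a(z) ≥ s }` equals
`{ x ∈ Λ_I : b(x) ≥ s }`; consequently `f_x(a) = −b(x)`, and `f_x(a) = −a(z)`
for any `z ∈ Λ` with `r_I(z) = x`. -/
theorem halfCl_inter_component {n : ℕ} [NeZero n]
    (I : Finset (Fin n)) (hI : I.Nonempty)
    (i j : Fin n) (hij : i ≠ j) (hiI : i ∈ I) (hjI : j ∈ I) :
    (∀ s : ℝ, halfCl i j s ∩ Set.range (embC I hI) =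
        embC I hI '' {y : Comp I | s ≤ bFun I ⟨i, hiI⟩ ⟨j, hjI⟩ y}) ∧
    (∀ y : Comp I,
        fO {embC I hI y} i j = ((-(bFun I ⟨i, hiI⟩ ⟨j, hjI⟩ y) : ℝ) : EReal)) ∧
    (∀ (y : Comp I) (z : Apt n), resQ I z = y →
        fO {embC I hI y} i j = ((-(aFun i j z) : ℝ) : EReal)) :=
  halfCl_inter_component_general I hI i j hiI hjI

end CompApp
end

section
/- Fix i ∈ {1,…,n}, and let E_i = D_i ∪ ⋃_{i ∈ J ⊂ n̲} r_J(D_i) ⊂ Λ̄ be the closed corner around the point Λ_{{i}}. The map α : E_i → ⊕_{j≠i} ℝ_{≥0,∞} e_j sending a point Σ_{j∈I, j≠i} x_j(−η_j^I) ∈ E_i ∩ Λ_I to Σ_{j∈I,j≠i} x_j e_j + Σ_{j∉I} ∞·e_j is a homeomorphism (where Λ_I ranges over I containing i). -/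
open Set Pointwise Topology Filter

namespace CompApp

variable {n : ℕ}

variable [NeZero n]

open scoped ENNReal

/-- The closed corner `E_i = D_i ∪ ⋃_{i∈J} r_J(D_i) ⊂ Λ̄` around the point
`Λ_{{i}}`. -/
noncomputable def corner {n : ℕ} [NeZero n] (i : Fin n) : Set (CApt n) :=
  {p | i ∈ p.1.1 ∧ p.2 ∈ resQ p.1.1 '' cone {i}}


/-! ### Auxiliary development for the corner homeomorphism -/

section Aux

open scoped ENNReal

variable {n : ℕ}

/-- index type of the full apartment -/
abbrev UT (n : ℕ) := ↥(Finset.univ : Finset (Fin n))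

/-- inclusion of `Fin n` into the index type -/
def uvx {n : ℕ} (l : Fin n) : UT n := ⟨l, Finset.mem_univ l⟩

/-- the product parametrizing the corner -/
abbrev PI (n : ℕ) (i : Fin n) : Type := {j : Fin n // j ≠ i} → ℝ≥0∞

/-- extension of `f` by `0` at `i` -/
noncomputable def extd (i : Fin n) (f : PI n i) (l : Fin n) : ℝ≥0∞ :=
  if h : l = i then 0 else f ⟨l, h⟩

/-- real coordinates -/
noncomputable def tF (i : Fin n) (f : PI n i) (l : Fin n) : ℝ :=
  (extd i f l).toReal

open Classical in
/-- the set of finite coordinates (always contains `i`) -/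
noncomputable def IFs (i : Fin n) (f : PI n i) : Finset (Fin n) :=
  Finset.univ.filter fun l => extd i f l ≠ ⊤

lemma extd_self (i : Fin n) (f : PI n i) : extd i f i = 0 := dif_pos rfl

lemma extd_coe (i : Fin n) (f : PI n i) (j : {j : Fin n // j ≠ i}) :
    extd i f j = f j := dif_neg j.2

lemma tF_self (i : Fin n) (f : PI n i) : tF i f i = 0 := by
  simp [tF, extd_self]

lemma tF_nonneg (i : Fin n) (f : PI n i) (l : Fin n) : 0 ≤ tF i f l :=
  ENNReal.toReal_nonneg

lemma mem_IFs {i : Fin n} {f : PI n i} {l : Fin n} :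
    l ∈ IFs i f ↔ extd i f l ≠ ⊤ := by
  simp [IFs]

lemma not_mem_IFs {i : Fin n} {f : PI n i} {l : Fin n} :
    l ∉ IFs i f ↔ extd i f l = ⊤ := by
  simp [IFs]

lemma i_mem_IFs (i : Fin n) (f : PI n i) : i ∈ IFs i f :=
  mem_IFs.mpr (by simp [extd_self])

lemma ofReal_tF {i : Fin n} {f : PI n i} {l : Fin n} (h : l ∈ IFs i f) :
    ENNReal.ofReal (tF i f l) = extd i f l :=
  ENNReal.ofReal_toReal (mem_IFs.mp h)

/-- the parametrization of the corner -/
noncomputable def bMap (i : Fin n) (f : PI n i) : CApt n :=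
  embC (IFs i f) ⟨i, i_mem_IFs i f⟩ (mkC _ fun l => -(tF i f l.1))

lemma mkC_eq_iff {I : Finset (Fin n)} (a b : ↥I → ℝ) :
    mkC I a = mkC I b ↔ ∃ r : ℝ, ∀ l, a l = b l + r := by
  show Submodule.Quotient.mk a = Submodule.Quotient.mk b ↔ _
  rw [Submodule.Quotient.eq, Submodule.mem_span_singleton]
  constructor
  · rintro ⟨r, hr⟩
    refine ⟨r, fun l => ?_⟩
    have := congrFun hr l
    simp only [Pi.smul_apply, Pi.one_apply, smul_eq_mul, mul_one, Pi.sub_apply] at this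
    linarith
  · rintro ⟨r, hr⟩
    refine ⟨r, funext fun l => ?_⟩
    simp only [Pi.smul_apply, Pi.one_apply, smul_eq_mul, mul_one, Pi.sub_apply]
    linarith [hr l]

lemma resQ_mk (J : Finset (Fin n)) (y : UT n → ℝ) :
    resQ J (mkC _ y) = mkC J (fun l => y (uvx l.1)) := rfl

lemma mem_cone {J : Finset (Fin n)} {c : UT n → ℝ}
    (h0 : ∀ l : UT n, (l : Fin n) ∈ J → c l = 0)
    (hneg : ∀ l : UT n, (l : Fin n) ∉ J → c l ≤ 0) :
    mkC _ c ∈ cone J := ⟨c, ⟨h0, hneg⟩, rfl⟩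

lemma embC_eq_iff {I₁ I₂ : Finset (Fin n)} {h₁ : I₁.Nonempty} {h₂ : I₂.Nonempty}
    {w₁ : ↥I₁ → ℝ} {w₂ : ↥I₂ → ℝ} :
    embC I₁ h₁ (mkC I₁ w₁) = embC I₂ h₂ (mkC I₂ w₂) ↔
      I₁ = I₂ ∧ ∃ r : ℝ, ∀ (l : Fin n) (hl₁ : l ∈ I₁) (hl₂ : l ∈ I₂),
        w₁ ⟨l, hl₁⟩ = w₂ ⟨l, hl₂⟩ + r := by
  constructor
  · intro h
    have hI : I₁ = I₂ := congrArg (fun p : CApt n => p.1.1) h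
    subst hI
    refine ⟨rfl, ?_⟩
    have h2 : mkC I₁ w₁ = mkC I₁ w₂ := by
      have h' : (⟨⟨I₁, h₁⟩, mkC I₁ w₁⟩ : CApt n) = ⟨⟨I₁, h₂⟩, mkC I₁ w₂⟩ := h
      exact eq_of_heq (Sigma.mk.inj_iff.mp h').2
    obtain ⟨r, hr⟩ := (mkC_eq_iff _ _).mp h2
    exact ⟨r, fun l hl₁ hl₂ => hr ⟨l, hl₁⟩⟩
  · rintro ⟨hI, r, hr⟩
    subst hI
    have h2 : mkC I₁ w₁ = mkC I₁ w₂ := (mkC_eq_iff _ _).mpr ⟨r, fun l => hr l.1 l.2 l.2⟩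
    rw [show embC I₁ h₁ (mkC I₁ w₁) = embC I₁ h₂ (mkC I₁ w₁) from rfl, h2]

@[simp] lemma uvx_coe (l : Fin n) : ((uvx l : UT n) : Fin n) = l := rfl

lemma le_toReal_of_ofReal_le {x : ℝ≥0∞} {r : ℝ} (hx : x ≠ ⊤)
    (h : ENNReal.ofReal r ≤ x) : r ≤ x.toReal := by
  rcases le_or_gt r 0 with h0 | h0
  · exact h0.trans ENNReal.toReal_nonneg
  · have := ENNReal.toReal_mono hx h
    rwa [ENNReal.toReal_ofReal h0.le] at this

lemma bMap_mem_CUI {i : Fin n} {f : PI n i} {U : Set (Apt n)} {J : Finset (Fin n)} :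
    bMap i f ∈ CUI U J ↔
      ∃ u : UT n → ℝ, mkC _ u ∈ U ∧
        (∀ l : Fin n, l ∈ J → l ∈ IFs i f ∧ tF i f l = -(u (uvx l))) ∧
        (∀ l : Fin n, l ∉ J → ENNReal.ofReal (-(u (uvx l))) ≤ extd i f l) := by
  have hshow : bMap i f ∈ CUI U J ↔ J ⊆ IFs i f ∧
      (mkC _ fun l : ↥(IFs i f) => -(tF i f l.1)) ∈ resQ (IFs i f) '' (U + cone J) := Iff.rfl
  rw [hshow]
  constructor
  · rintro ⟨hJI, z, hz, hzp⟩
    rw [Set.mem_add] at hz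
    obtain ⟨a, ha, b, hb, hab⟩ := hz
    obtain ⟨c, ⟨hc0, hcneg⟩, rfl⟩ := hb
    obtain ⟨u₀, rfl⟩ := Submodule.mkQ_surjective _ a
    have hsum : (Submodule.span ℝ ({1} : Set (UT n → ℝ))).mkQ u₀ + (mkC Finset.univ) c
        = mkC Finset.univ (u₀ + c) := (map_add (mkC Finset.univ) u₀ c).symm
    rw [← hab, hsum, resQ_mk, mkC_eq_iff] at hzp
    obtain ⟨r, hr⟩ := hzp
    refine ⟨fun l => u₀ l - r, ?_, ?_, ?_⟩
    · have h5 : mkC (Finset.univ : Finset (Fin n)) (fun l => u₀ l - r) = mkC _ u₀ :=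
        (mkC_eq_iff _ _).mpr ⟨-r, fun l => by ring⟩
      rw [h5]; exact ha
    · intro l hl
      have hlI : l ∈ IFs i f := hJI hl
      have h1 : u₀ (uvx l) + c (uvx l) = -(tF i f l) + r := hr ⟨l, hlI⟩
      have h2 : c (uvx l) = 0 := hc0 (uvx l) hl
      exact ⟨hlI, by simp only [neg_sub]; linarith⟩
    · intro l hl
      by_cases hlI : l ∈ IFs i f
      · have h1 : u₀ (uvx l) + c (uvx l) = -(tF i f l) + r := hr ⟨l, hlI⟩
        have h2 : c (uvx l) ≤ 0 := hcneg (uvx l) hl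
        have h3 : -(u₀ (uvx l) - r) ≤ tF i f l := by linarith
        calc ENNReal.ofReal (-(u₀ (uvx l) - r)) ≤ ENNReal.ofReal (tF i f l) :=
              ENNReal.ofReal_le_ofReal h3
          _ = extd i f l := ofReal_tF hlI
      · rw [not_mem_IFs.mp hlI]; exact le_top
  · rintro ⟨u, hU, hJ, hnJ⟩
    have hJI : J ⊆ IFs i f := fun l hl => (hJ l hl).1
    refine ⟨hJI, ?_⟩
    classical
    set c : UT n → ℝ := fun l => if (l : Fin n) ∈ IFs i f then -(tF i f l.1) - u l else 0
      with hcdef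
    have hcIn : ∀ l : UT n, (l : Fin n) ∈ IFs i f → c l = -(tF i f l.1) - u l := by
      intro l hl; simp only [hcdef]; rw [if_pos hl]
    have hcOut : ∀ l : UT n, (l : Fin n) ∉ IFs i f → c l = 0 := by
      intro l hl; simp only [hcdef]; rw [if_neg hl]
    refine ⟨mkC _ u + mkC _ c, add_mem_add hU (mem_cone ?_ ?_), ?_⟩
    · intro l hl
      have h1 : tF i f l.1 = -(u (uvx l.1)) := (hJ l.1 hl).2
      have h2 : u (uvx l.1) = u l := rfl
      rw [hcIn l (hJI hl)]
      linarith
    · intro l hl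
      by_cases hmem : (l : Fin n) ∈ IFs i f
      · have h2 := hnJ l.1 hl
        have h3 : -(u (uvx l.1)) ≤ tF i f l.1 :=
          le_toReal_of_ofReal_le (mem_IFs.mp hmem) h2
        have h4 : u (uvx l.1) = u l := rfl
        rw [hcIn l hmem]
        linarith
      · rw [hcOut l hmem]
    · rw [← map_add, resQ_mk]
      refine congrArg (mkC _) (funext fun l => ?_)
      show u (uvx l.1) + c (uvx l.1) = -(tF i f l.1)
      rw [hcIn (uvx l.1) l.2]
      simp only [uvx_coe]
      ring

lemma bMap_mem_corner [NeZero n] (i : Fin n) (f : PI n i) : bMap i f ∈ corner i := by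
  have hshow : bMap i f ∈ corner i ↔ i ∈ IFs i f ∧
      (mkC _ fun l : ↥(IFs i f) => -(tF i f l.1)) ∈ resQ (IFs i f) '' cone {i} := Iff.rfl
  rw [hshow]
  refine ⟨i_mem_IFs i f, ?_⟩
  refine ⟨mkC _ (fun l : UT n => -(tF i f l.1)), mem_cone ?_ ?_, ?_⟩
  · intro l hl
    have : (l : Fin n) = i := Finset.mem_singleton.mp hl
    simp [this, tF_self]
  · intro l _
    simp [tF_nonneg]
  · rw [resQ_mk]
    rfl

lemma IFs_eq_univ_iff {i : Fin n} {f : PI n i} :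
    IFs i f = Finset.univ ↔ ∀ j : {j : Fin n // j ≠ i}, f j ≠ ⊤ := by
  rw [Finset.eq_univ_iff_forall]
  constructor
  · intro h j
    have := mem_IFs.mp (h (j : Fin n))
    rwa [extd_coe] at this
  · intro h l
    rw [mem_IFs]
    by_cases hl : l = i
    · subst hl; rw [extd_self]; simp
    · rw [show extd i f l = f ⟨l, hl⟩ from dif_neg hl]
      exact h ⟨l, hl⟩

lemma bMap_mem_emb [NeZero n] {i : Fin n} {f : PI n i} {U : Set (Apt n)} :
    bMap i f ∈ emb '' U ↔ IFs i f = Finset.univ ∧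
      mkC _ (fun l : UT n => -(tF i f l.1)) ∈ U := by
  constructor
  · rintro ⟨z, hz, hzp⟩
    obtain ⟨w, rfl⟩ := Submodule.mkQ_surjective _ z
    have hzp' : embC Finset.univ Finset.univ_nonempty (mkC Finset.univ w)
        = embC (IFs i f) ⟨i, i_mem_IFs i f⟩ (mkC _ fun l => -(tF i f l.1)) := hzp
    replace hzp' := embC_eq_iff.mp hzp'
    obtain ⟨hIF, r, hr⟩ := hzp'
    refine ⟨hIF.symm, ?_⟩
    have h5 : mkC (Finset.univ : Finset (Fin n)) (fun l : UT n => -(tF i f l.1))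
        = mkC _ w := by
      refine (mkC_eq_iff _ _).mpr ⟨-r, fun l => ?_⟩
      have h := hr l.1 (Finset.mem_univ _) (hIF ▸ Finset.mem_univ _)
      have h' : w l = -(tF i f l.1) + r := h
      linarith
    rw [h5]; exact hz
  · rintro ⟨hIF, hU⟩
    refine ⟨mkC _ (fun l : UT n => -(tF i f l.1)), hU, ?_⟩
    show embC Finset.univ Finset.univ_nonempty (mkC Finset.univ (fun l : UT n => -(tF i f l.1)))
        = embC (IFs i f) ⟨i, i_mem_IFs i f⟩ (mkC _ fun l => -(tF i f l.1))
    refine embC_eq_iff.mpr ?_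
    exact ⟨hIF.symm, 0, fun l hl1 hl2 => by ring⟩

lemma bMap_injective (i : Fin n) : Function.Injective (bMap i (n := n)) := by
  intro f g h
  have h' : embC (IFs i f) ⟨i, i_mem_IFs i f⟩ (mkC _ fun l => -(tF i f l.1))
      = embC (IFs i g) ⟨i, i_mem_IFs i g⟩ (mkC _ fun l => -(tF i g l.1)) := h
  replace h' := embC_eq_iff.mp h'
  obtain ⟨hIF, r, hr⟩ := h'
  have hr0 : r = 0 := by
    have := hr i (i_mem_IFs i f) (i_mem_IFs i g)
    simp only [tF_self] at this
    linarith
  funext j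
  by_cases hj : (j : Fin n) ∈ IFs i f
  · have hjg : (j : Fin n) ∈ IFs i g := hIF ▸ hj
    have h1 := hr (j : Fin n) hj hjg
    rw [hr0] at h1
    have h2 : tF i f (j : Fin n) = tF i g (j : Fin n) := by linarith
    have hfne : f j ≠ ⊤ := by have := mem_IFs.mp hj; rwa [extd_coe] at this
    have hgne : g j ≠ ⊤ := by have := mem_IFs.mp hjg; rwa [extd_coe] at this
    have h3 : (f j).toReal = (g j).toReal := by
      have e1 : tF i f (j : Fin n) = (f j).toReal := by rw [tF, extd_coe]
      have e2 : tF i g (j : Fin n) = (g j).toReal := by rw [tF, extd_coe]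
      rw [← e1, ← e2, h2]
    exact (ENNReal.toReal_eq_toReal_iff' hfne hgne).mp h3
  · have hjg : (j : Fin n) ∉ IFs i g := fun hc => hj (hIF ▸ hc)
    have h1 : f j = ⊤ := by have := not_mem_IFs.mp hj; rwa [extd_coe] at this
    have h2 : g j = ⊤ := by have := not_mem_IFs.mp hjg; rwa [extd_coe] at this
    rw [h1, h2]

lemma bMap_surjective [NeZero n] (i : Fin n) (p : CApt n) (hp : p ∈ corner i) :
    ∃ f : PI n i, bMap i f = p := by
  obtain ⟨⟨I, hI⟩, y⟩ := p
  obtain ⟨hiI, z, hz, hzy⟩ := hp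
  obtain ⟨c, ⟨hc0, hcneg⟩, rfl⟩ := hz
  rw [resQ_mk] at hzy
  classical
  refine ⟨fun j => if (j : Fin n) ∈ I then ENNReal.ofReal (-(c (uvx j))) else ⊤, ?_⟩
  set f : PI n i := fun j => if (j : Fin n) ∈ I then ENNReal.ofReal (-(c (uvx j))) else ⊤
    with hfdef
  have hext : ∀ (l : Fin n) (hl : l ≠ i), extd i f l
      = if l ∈ I then ENNReal.ofReal (-(c (uvx l))) else ⊤ := by
    intro l hl
    rw [show extd i f l = f ⟨l, hl⟩ from dif_neg hl]
  have hIFs : IFs i f = I := by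
    ext l
    rw [mem_IFs]
    by_cases hl : l = i
    · subst hl
      simp [extd_self, hiI]
    · rw [hext l hl]
      by_cases hli : l ∈ I
      · simp [hli]
      · simp [hli]
  have htF : ∀ (l : Fin n), l ∈ I → tF i f l = -(c (uvx l)) := by
    intro l hlI
    by_cases hl : l = i
    · subst hl
      rw [tF_self, hc0 (uvx l) (Finset.mem_singleton.mpr rfl)]
      ring
    · rw [tF, hext l hl, if_pos hlI, ENNReal.toReal_ofReal]
      have := hcneg (uvx l) (fun hmem => hl (Finset.mem_singleton.mp hmem))
      linarith
  have hy : (mkC I fun l : ↥I => c (uvx l.1)) = y := hzy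
  show embC (IFs i f) ⟨i, i_mem_IFs i f⟩ (mkC _ fun l => -(tF i f l.1)) = embC I hI y
  rw [← hy]; refine embC_eq_iff.mpr ?_
  refine ⟨hIFs, 0, fun l hl1 hl2 => ?_⟩
  rw [htF l hl2]
  ring

lemma isOpen_emb_image [NeZero n] {U : Set (Apt n)} (hU : IsOpen U) :
    IsOpen (emb '' U : Set (CApt n)) :=
  TopologicalSpace.GenerateOpen.basic _ (Or.inl ⟨U, hU, rfl⟩)

lemma isOpen_CUI [NeZero n] {U : Set (Apt n)} {I : Finset (Fin n)} (hI : I.Nonempty)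
    (hIu : I ≠ Finset.univ) (hU : IsOpen U) (hB : BoundedA U) : IsOpen (CUI U I) :=
  TopologicalSpace.GenerateOpen.basic _ (Or.inr ⟨U, I, hI, hIu, hU, hB, rfl⟩)

lemma continuous_mkC (I : Finset (Fin n)) : Continuous (mkC (n := n) I) :=
  continuous_quot_mk

lemma isOpenMap_mkC (I : Finset (Fin n)) : IsOpenMap (mkC (n := n) I) :=
  QuotientAddGroup.isOpenMap_coe

lemma isOpen_toReal_near (c δ : ℝ) :
    IsOpen {x : ℝ≥0∞ | x ≠ ⊤ ∧ |x.toReal - c| < δ} := by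
  have heq : {x : ℝ≥0∞ | x ≠ ⊤ ∧ |x.toReal - c| < δ}
      = {x : ℝ≥0∞ | x ≠ ⊤} ∩ ENNReal.toReal ⁻¹' Metric.ball c δ := by
    ext x
    simp [Metric.mem_ball, Real.dist_eq]
  rw [heq]
  exact ENNReal.continuousOn_toReal.isOpen_inter_preimage ENNReal.isOpen_ne_top
    Metric.isOpen_ball

lemma isOpen_S {i : Fin n} {U : Set (Apt n)} (hU : IsOpen U) (J : Finset (Fin n)) :
    IsOpen {f : PI n i | bMap i f ∈ CUI U J} := by
  rw [isOpen_iff_forall_mem_open]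
  intro f₀ hf₀
  rw [Set.mem_setOf_eq, bMap_mem_CUI] at hf₀
  obtain ⟨u, hU0, hJ, hnJ⟩ := hf₀
  have hpre : IsOpen ((mkC (Finset.univ : Finset (Fin n))) ⁻¹' U) :=
    hU.preimage (continuous_mkC _)
  obtain ⟨ε, hε, hball⟩ := Metric.isOpen_iff.mp hpre u hU0
  classical
  set NL : {j : Fin n // j ≠ i} → Set ℝ≥0∞ := fun j =>
    if (j : Fin n) ∈ J then {x | x ≠ ⊤ ∧ |x.toReal - (f₀ j).toReal| < ε/2}
    else (if 0 < -(u (uvx j)) - ε/2 then Set.Ioi (ENNReal.ofReal (-(u (uvx j)) - ε/2))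
      else Set.univ) with hNL
  have hNLopen : ∀ j, IsOpen (NL j) := by
    intro j
    simp only [hNL]
    by_cases h1 : (j : Fin n) ∈ J
    · rw [if_pos h1]; exact isOpen_toReal_near _ _
    · rw [if_neg h1]
      by_cases h2 : 0 < -(u (uvx j)) - ε/2
      · rw [if_pos h2]; exact isOpen_Ioi
      · rw [if_neg h2]; exact isOpen_univ
  refine ⟨⋂ j, (fun f : PI n i => f j) ⁻¹' NL j, ?_, ?_, ?_⟩
  · -- the intersection is contained in the set
    intro f hf
    rw [Set.mem_iInter] at hf
    rw [Set.mem_setOf_eq, bMap_mem_CUI]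
    refine ⟨fun l => if (l : Fin n) ∈ J then -(tF i f l.1)
      else (if (l : Fin n) = i then u l else u l + ε/2), ?_, ?_, ?_⟩
    · apply hball
      rw [Metric.mem_ball, dist_pi_lt_iff hε]
      intro l
      rw [Real.dist_eq]
      have hul : u (uvx (l : Fin n)) = u l := rfl
      by_cases hlJ : (l : Fin n) ∈ J
      · simp only [if_pos hlJ]
        have h1 : tF i f₀ (l : Fin n) = -(u (uvx (l : Fin n))) := (hJ l.1 hlJ).2
        by_cases hli : (l : Fin n) = i
        · have h2 : tF i f (l : Fin n) = 0 := by rw [hli, tF_self]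
          have h3 : tF i f₀ (l : Fin n) = 0 := by rw [hli, tF_self]
          rw [h2]
          have : |(-0 : ℝ) - u l| = 0 := by
            rw [show (-0 : ℝ) - u l = -(u l) by linarith [hul, h1, h3]]
            rw [abs_eq_zero]; linarith
          rw [this]; exact hε
        · have hfj := hf ⟨(l : Fin n), hli⟩
          simp only [hNL, Set.mem_preimage, if_pos hlJ, Set.mem_setOf_eq] at hfj
          obtain ⟨hfne, hfcl⟩ := hfj
          have e1 : tF i f (l : Fin n) = (f ⟨(l : Fin n), hli⟩).toReal := by
            rw [tF, show extd i f (l : Fin n) = f ⟨(l : Fin n), hli⟩ from dif_neg hli]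
          have e2 : tF i f₀ (l : Fin n) = (f₀ ⟨(l : Fin n), hli⟩).toReal := by
            rw [tF, show extd i f₀ (l : Fin n) = f₀ ⟨(l : Fin n), hli⟩ from dif_neg hli]
          have habs : |tF i f (l : Fin n) - tF i f₀ (l : Fin n)| < ε/2 := by
            rw [e1, e2]; exact hfcl
          have heq2 : -(tF i f (l : Fin n)) - u l
              = -(tF i f (l : Fin n) - tF i f₀ (l : Fin n)) := by linarith
          rw [heq2, abs_neg]
          linarith
      · simp only [if_neg hlJ]
        by_cases hli : (l : Fin n) = i
        · rw [if_pos hli]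
          simpa using hε
        · rw [if_neg hli]
          have : |u l + ε/2 - u l| = ε/2 := by
            rw [show u l + ε/2 - u l = ε/2 by ring, abs_of_pos (by linarith)]
          rw [this]; linarith
    · intro l hlJ
      constructor
      · rw [mem_IFs]
        by_cases hli : l = i
        · subst hli; rw [extd_self]; simp
        · have hfj := hf ⟨l, hli⟩
          simp only [hNL, Set.mem_preimage, if_pos hlJ, Set.mem_setOf_eq] at hfj
          rw [show extd i f l = f ⟨l, hli⟩ from dif_neg hli]
          exact hfj.1
      · simp only [uvx_coe, hlJ, ↓reduceIte]
        ring
    · intro l hlJ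
      simp only [uvx_coe, hlJ, ↓reduceIte]
      by_cases hli : l = i
      · simp only [hli, ↓reduceIte]
        subst hli
        rw [extd_self]
        have h3 := hnJ l hlJ
        rw [extd_self, le_zero_iff, ENNReal.ofReal_eq_zero] at h3
        rw [le_zero_iff, ENNReal.ofReal_eq_zero]
        linarith
      · simp only [hli, ↓reduceIte]
        by_cases h2 : 0 < -(u (uvx l)) - ε/2
        · have hfj := hf ⟨l, hli⟩
          simp only [hNL, Set.mem_preimage, if_neg hlJ, if_pos h2, Set.mem_Ioi] at hfj
          rw [show extd i f l = f ⟨l, hli⟩ from dif_neg hli]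
          exact le_of_lt (by
            refine lt_of_le_of_lt ?_ hfj
            exact ENNReal.ofReal_le_ofReal (by linarith))
        · rw [ENNReal.ofReal_of_nonpos (by push_neg at h2; linarith)]
          exact zero_le
  · exact isOpen_iInter_of_finite fun j => (hNLopen j).preimage (continuous_apply j)
  · rw [Set.mem_iInter]
    intro j
    rw [Set.mem_preimage]
    simp only [hNL]
    by_cases h1 : (j : Fin n) ∈ J
    · rw [if_pos h1]
      have h2 := (hJ (j : Fin n) h1).1
      have hne : f₀ j ≠ ⊤ := by have := mem_IFs.mp h2; rwa [extd_coe] at this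
      exact ⟨hne, by simpa using hε⟩
    · rw [if_neg h1]
      by_cases h2 : 0 < -(u (uvx j)) - ε/2
      · rw [if_pos h2]
        have h3 := hnJ (j : Fin n) h1
        rw [extd_coe] at h3
        have h4 : ENNReal.ofReal (-(u (uvx j)) - ε/2) < ENNReal.ofReal (-(u (uvx j))) := by
          rw [ENNReal.ofReal_lt_ofReal_iff (by linarith)]
          linarith
        exact h4.trans_le h3
      · rw [if_neg h2]; exact Set.mem_univ _

lemma isOpen_T [NeZero n] {i : Fin n} {U : Set (Apt n)} (hU : IsOpen U) :
    IsOpen {f : PI n i | bMap i f ∈ emb '' U} := by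
  have heq : {f : PI n i | bMap i f ∈ emb '' U} =
      {f : PI n i | ∀ j, f j ≠ ⊤} ∩
        (fun f : PI n i => mkC _ (fun l : UT n => -(tF i f l.1))) ⁻¹' U := by
    ext f
    rw [Set.mem_setOf_eq, bMap_mem_emb, IFs_eq_univ_iff]
    rfl
  rw [heq]
  refine ContinuousOn.isOpen_inter_preimage ?_ ?_ hU
  · apply (continuous_mkC _).comp_continuousOn
    rw [continuousOn_pi]
    intro l
    by_cases hli : (l : Fin n) = i
    · have hfun : (fun f : PI n i => -(tF i f l.1)) = fun _ => (0 : ℝ) := by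
        funext f
        rw [show tF i f l.1 = 0 by rw [hli]; exact tF_self i f]
        ring
      rw [hfun]
      exact continuousOn_const
    · have hfun : (fun f : PI n i => -(tF i f l.1))
          = (fun x : ℝ≥0∞ => -(x.toReal)) ∘ (fun f : PI n i => f ⟨l.1, hli⟩) := by
        funext f
        simp only [Function.comp_apply, tF,
          show extd i f l.1 = f ⟨l.1, hli⟩ from dif_neg hli]
      rw [hfun]
      refine ContinuousOn.comp (t := {x : ℝ≥0∞ | x ≠ ⊤}) ?_ (continuous_apply _).continuousOn ?_
      · exact ENNReal.continuousOn_toReal.neg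
      · intro f hf
        exact hf ⟨l.1, hli⟩
  · have : {f : PI n i | ∀ j, f j ≠ ⊤} = ⋂ j, (fun f : PI n i => f j) ⁻¹' {x | x ≠ ⊤} := by
      ext f; simp
    rw [this]
    exact isOpen_iInter_of_finite fun j =>
      ENNReal.isOpen_ne_top.preimage (continuous_apply j)

lemma continuous_bMap [NeZero n] (i : Fin n) : Continuous (bMap i (n := n)) := by
  refine continuous_generateFrom_iff.mpr ?_
  rintro s (⟨U, hU, rfl⟩ | ⟨U, J, hJne, hJu, hU, hUB, rfl⟩)
  · exact isOpen_T hU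
  · exact isOpen_S hU J

lemma key_nbhd [NeZero n] (i : Fin n) (f₀ : PI n i) {ε : ℝ} (hε : 0 < ε) (R : ℝ) :
    ∃ O : Set (CApt n), IsOpen O ∧ bMap i f₀ ∈ O ∧
      ∀ f : PI n i, bMap i f ∈ O →
        (∀ l : Fin n, l ∈ IFs i f₀ → l ∈ IFs i f ∧ |tF i f l - tF i f₀ l| < 2*ε) ∧
        (∀ l : Fin n, l ∉ IFs i f₀ → ENNReal.ofReal (R - 2*ε) ≤ extd i f l) := by
  classical
  set u₀ : UT n → ℝ := fun l => if (l : Fin n) ∈ IFs i f₀ then -(tF i f₀ l.1) else -R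
    with hu₀
  have hu₀In : ∀ l : UT n, (l : Fin n) ∈ IFs i f₀ → u₀ l = -(tF i f₀ l.1) := by
    intro l hl; simp only [hu₀]; rw [if_pos hl]
  have hu₀Out : ∀ l : UT n, (l : Fin n) ∉ IFs i f₀ → u₀ l = -R := by
    intro l hl; simp only [hu₀]; rw [if_neg hl]
  set U : Set (Apt n) := (mkC _) '' Metric.ball u₀ ε with hUdef
  have hUopen : IsOpen U := isOpenMap_mkC _ _ Metric.isOpen_ball
  have hUB : BoundedA U := ⟨Metric.ball u₀ ε, Metric.isBounded_ball, Set.Subset.rfl⟩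
  have hu₀i : u₀ (uvx i) = 0 := by
    rw [hu₀In (uvx i) (i_mem_IFs i f₀), uvx_coe, tF_self]
    ring
  -- decoding a membership `mkC u ∈ U`
  have hdec : ∀ u : UT n → ℝ, mkC (Finset.univ : Finset (Fin n)) u ∈ U →
      ∃ w : UT n → ℝ, (∀ l : UT n, |w l - u₀ l| < ε) ∧ ∃ r : ℝ, ∀ l : UT n, w l = u l + r := by
    intro u hu
    rw [hUdef] at hu
    obtain ⟨w, hw, hwu⟩ := hu
    obtain ⟨r, hr⟩ := (mkC_eq_iff _ _).mp hwu
    refine ⟨w, fun l => ?_, r, hr⟩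
    have := (dist_le_pi_dist w u₀ l).trans_lt (Metric.mem_ball.mp hw)
    rwa [Real.dist_eq] at this
  by_cases hcase : IFs i f₀ = Finset.univ
  · refine ⟨emb '' U, isOpen_emb_image hUopen, ?_, ?_⟩
    · rw [bMap_mem_emb]
      refine ⟨hcase, ⟨u₀, Metric.mem_ball_self hε, ?_⟩⟩
      refine congrArg (mkC _) (funext fun l => ?_)
      rw [hu₀In l (by rw [hcase]; exact Finset.mem_univ _)]
    · intro f hf
      rw [bMap_mem_emb] at hf
      obtain ⟨hIFf, hfU⟩ := hf
      obtain ⟨w, hwb, r, hr⟩ := hdec _ hfU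
      have hri : w (uvx i) = 0 + r := by
        have := hr (uvx i)
        rwa [show (-(tF i f (uvx i).1)) = 0 by rw [uvx_coe, tF_self]; ring] at this
      have hrabs : |r| < ε := by
        have := hwb (uvx i)
        rw [hu₀i] at this
        have : |r| < ε := by
          rw [show r = w (uvx i) - 0 by linarith [hri]]
          simpa using this
        exact this
      constructor
      · intro l _
        refine ⟨by rw [hIFf]; exact Finset.mem_univ _, ?_⟩
        have h1 := hr (uvx l)
        have h2 := hwb (uvx l)
        have h3 : u₀ (uvx l) = -(tF i f₀ l) := by
          rw [hu₀In (uvx l) (by rw [hcase]; exact Finset.mem_univ _), uvx_coe]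
        have hr2 := abs_lt.mp hrabs
        rw [abs_sub_lt_iff]
        rw [abs_sub_lt_iff] at h2
        simp only [uvx_coe] at h1 h2 h3
        constructor <;> linarith [h1, h2.1, h2.2, h3, hr2.1, hr2.2]
      · intro l hl
        exact absurd (by rw [hcase]; exact Finset.mem_univ _) hl
  · refine ⟨CUI U (IFs i f₀), isOpen_CUI ⟨i, i_mem_IFs i f₀⟩ hcase hUopen hUB, ?_, ?_⟩
    · rw [bMap_mem_CUI]
      refine ⟨u₀, ⟨u₀, Metric.mem_ball_self hε, rfl⟩, ?_, ?_⟩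
      · intro l hl
        refine ⟨hl, ?_⟩
        rw [hu₀In (uvx l) (by rwa [uvx_coe]), uvx_coe]
        ring
      · intro l hl
        rw [not_mem_IFs.mp hl]
        exact le_top
    · intro f hf
      rw [bMap_mem_CUI] at hf
      obtain ⟨u, huU, hin, hout⟩ := hf
      obtain ⟨w, hwb, r, hr⟩ := hdec _ huU
      have hui : u (uvx i) = 0 := by
        have := (hin i (i_mem_IFs i f₀)).2
        rw [tF_self] at this
        linarith
      have hrabs : |r| < ε := by
        have h2 := hwb (uvx i)
        have h1 := hr (uvx i)
        rw [hui, hu₀i] at *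
        rw [show r = w (uvx i) - 0 by linarith [h1]]
        simpa using h2
      constructor
      · intro l hl
        refine ⟨(hin l hl).1, ?_⟩
        have h1 := hr (uvx l)
        have h2 := hwb (uvx l)
        have h3 : u₀ (uvx l) = -(tF i f₀ l) := by
          rw [hu₀In (uvx l) (by rwa [uvx_coe]), uvx_coe]
        have h4 : tF i f l = -(u (uvx l)) := (hin l hl).2
        have hr2 := abs_lt.mp hrabs
        rw [abs_sub_lt_iff]
        rw [abs_sub_lt_iff] at h2
        constructor <;> linarith [h1, h2.1, h2.2, h3, h4, hr2.1, hr2.2]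
      · intro l hl
        have h1 := hr (uvx l)
        have h2 := hwb (uvx l)
        have h3 : u₀ (uvx l) = -R := hu₀Out (uvx l) (by rwa [uvx_coe])
        have h5 : R - 2*ε ≤ -(u (uvx l)) := by
          have hr2 := abs_lt.mp hrabs
          rw [abs_sub_lt_iff] at h2
          linarith [h1, h2.1, h2.2, h3, hr2.1, hr2.2]
        exact (ENNReal.ofReal_le_ofReal h5).trans (hout l hl)

/-- the bijection between the product and the corner -/
noncomputable def eqvFun [NeZero n] (i : Fin n) : PI n i ≃ (corner i (n := n)) :=
  Equiv.ofBijective (fun f => ⟨bMap i f, bMap_mem_corner i f⟩)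
    ⟨fun f g h => bMap_injective i (congrArg Subtype.val h),
     fun p => by
      obtain ⟨f, hf⟩ := bMap_surjective i p.1 p.2
      exact ⟨f, Subtype.ext hf⟩⟩

lemma eqvFun_symm_val [NeZero n] (i : Fin n) (x : corner i (n := n)) :
    bMap i ((eqvFun i).symm x) = x.1 :=
  congrArg Subtype.val ((eqvFun i).apply_symm_apply x)

lemma isOpen_coord_Ioi [NeZero n] (i : Fin n) (j : {j : Fin n // j ≠ i}) (a : ℝ≥0∞) :
    IsOpen {x : corner i (n := n) | a < ((eqvFun i).symm x) j} := by
  rw [isOpen_iff_forall_mem_open]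
  intro x hx
  rw [Set.mem_setOf_eq] at hx
  set f₀ := (eqvFun i).symm x with hf₀
  have hxb : bMap i f₀ = x.1 := eqvFun_symm_val i x
  have ha : a ≠ ⊤ := (hx.trans_le le_top).ne
  by_cases hj : (j : Fin n) ∈ IFs i f₀
  · have hne : f₀ j ≠ ⊤ := by have := mem_IFs.mp hj; rwa [extd_coe] at this
    have htlt : a.toReal < tF i f₀ (j : Fin n) := by
      rw [tF, extd_coe]
      exact (ENNReal.toReal_lt_toReal ha hne).mpr hx
    have hεpos : 0 < (tF i f₀ (j : Fin n) - a.toReal)/4 := by linarith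
    obtain ⟨O, hOopen, hOmem, hOc⟩ := key_nbhd i f₀ hεpos 0
    refine ⟨Subtype.val ⁻¹' O, ?_, hOopen.preimage continuous_subtype_val, ?_⟩
    · intro y hy
      rw [Set.mem_preimage] at hy
      set g := (eqvFun i).symm y with hg
      have hyb : bMap i g = y.1 := eqvFun_symm_val i y
      have hmem : bMap i g ∈ O := by rw [hyb]; exact hy
      obtain ⟨hgI, hgabs⟩ := (hOc g hmem).1 (j : Fin n) hj
      have hgne : g j ≠ ⊤ := by have := mem_IFs.mp hgI; rwa [extd_coe] at this
      rw [Set.mem_setOf_eq]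
      have h1 : (g j).toReal = tF i g (j : Fin n) := by rw [tF, extd_coe]
      have h2 := abs_lt.mp hgabs
      have h3 : a.toReal < (g j).toReal := by
        rw [h1]; linarith [h2.1, h2.2]
      exact (ENNReal.toReal_lt_toReal ha hgne).mp h3
    · rw [Set.mem_preimage, ← hxb]
      exact hOmem
  · obtain ⟨O, hOopen, hOmem, hOc⟩ := key_nbhd i f₀ one_pos (a.toReal + 3)
    refine ⟨Subtype.val ⁻¹' O, ?_, hOopen.preimage continuous_subtype_val, ?_⟩
    · intro y hy
      rw [Set.mem_preimage] at hy
      set g := (eqvFun i).symm y with hg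
      have hyb : bMap i g = y.1 := eqvFun_symm_val i y
      have hmem : bMap i g ∈ O := by rw [hyb]; exact hy
      have hbd := (hOc g hmem).2 (j : Fin n) hj
      rw [extd_coe] at hbd
      rw [Set.mem_setOf_eq]
      have h4 : a < ENNReal.ofReal (a.toReal + 3 - 2*1) := by
        rw [ENNReal.lt_ofReal_iff_toReal_lt ha]
        linarith
      exact h4.trans_le hbd
    · rw [Set.mem_preimage, ← hxb]
      exact hOmem

lemma isOpen_coord_Iio [NeZero n] (i : Fin n) (j : {j : Fin n // j ≠ i}) (a : ℝ≥0∞) :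
    IsOpen {x : corner i (n := n) | ((eqvFun i).symm x) j < a} := by
  rw [isOpen_iff_forall_mem_open]
  intro x hx
  rw [Set.mem_setOf_eq] at hx
  set f₀ := (eqvFun i).symm x with hf₀
  have hxb : bMap i f₀ = x.1 := eqvFun_symm_val i x
  have hne : f₀ j ≠ ⊤ := (hx.trans_le le_top).ne
  have hj : (j : Fin n) ∈ IFs i f₀ := by rw [mem_IFs, extd_coe]; exact hne
  rcases eq_or_ne a ⊤ with ha | ha
  · obtain ⟨O, hOopen, hOmem, hOc⟩ := key_nbhd i f₀ one_pos 0
    refine ⟨Subtype.val ⁻¹' O, ?_, hOopen.preimage continuous_subtype_val, ?_⟩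
    · intro y hy
      rw [Set.mem_preimage] at hy
      set g := (eqvFun i).symm y with hg
      have hyb : bMap i g = y.1 := eqvFun_symm_val i y
      have hmem : bMap i g ∈ O := by rw [hyb]; exact hy
      obtain ⟨hgI, _⟩ := (hOc g hmem).1 (j : Fin n) hj
      have hgne : g j ≠ ⊤ := by have := mem_IFs.mp hgI; rwa [extd_coe] at this
      rw [Set.mem_setOf_eq, ha]
      exact lt_top_iff_ne_top.mpr hgne
    · rw [Set.mem_preimage, ← hxb]
      exact hOmem
  · have htlt : tF i f₀ (j : Fin n) < a.toReal := by
      rw [tF, extd_coe]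
      exact (ENNReal.toReal_lt_toReal hne ha).mpr hx
    have hεpos : 0 < (a.toReal - tF i f₀ (j : Fin n))/4 := by linarith
    obtain ⟨O, hOopen, hOmem, hOc⟩ := key_nbhd i f₀ hεpos 0
    refine ⟨Subtype.val ⁻¹' O, ?_, hOopen.preimage continuous_subtype_val, ?_⟩
    · intro y hy
      rw [Set.mem_preimage] at hy
      set g := (eqvFun i).symm y with hg
      have hyb : bMap i g = y.1 := eqvFun_symm_val i y
      have hmem : bMap i g ∈ O := by rw [hyb]; exact hy
      obtain ⟨hgI, hgabs⟩ := (hOc g hmem).1 (j : Fin n) hj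
      have hgne : g j ≠ ⊤ := by have := mem_IFs.mp hgI; rwa [extd_coe] at this
      rw [Set.mem_setOf_eq]
      have h1 : (g j).toReal = tF i g (j : Fin n) := by rw [tF, extd_coe]
      have h2 := abs_lt.mp hgabs
      have h3 : (g j).toReal < a.toReal := by rw [h1]; linarith [h2.1, h2.2]
      exact (ENNReal.toReal_lt_toReal hgne ha).mp h3
    · rw [Set.mem_preimage, ← hxb]
      exact hOmem

lemma continuous_eqvFun_symm [NeZero n] (i : Fin n) :
    Continuous ((eqvFun i).symm : corner i (n := n) → PI n i) := by
  apply continuous_pi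
  intro j
  have htop : (inferInstance : TopologicalSpace ℝ≥0∞) =
      TopologicalSpace.generateFrom {s : Set ℝ≥0∞ | ∃ a, s = Set.Ioi a ∨ s = Set.Iio a} :=
    OrderTopology.topology_eq_generate_intervals
  have h1 := continuous_generateFrom_iff
    (f := fun x : corner i (n := n) => ((eqvFun i).symm x) j)
    (t := (inferInstance : TopologicalSpace (corner i (n := n))))
    (b := {s : Set ℝ≥0∞ | ∃ a, s = Set.Ioi a ∨ s = Set.Iio a})
  rw [← htop] at h1
  refine h1.mpr ?_
  rintro s ⟨a, rfl | rfl⟩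
  · exact isOpen_coord_Ioi i j a
  · exact isOpen_coord_Iio i j a

/-- the corner homeomorphism -/
noncomputable def cornerHomeo [NeZero n] (i : Fin n) :
    (corner i (n := n)) ≃ₜ PI n i where
  toEquiv := (eqvFun i).symm
  continuous_toFun := continuous_eqvFun_symm i
  continuous_invFun := (continuous_bMap i).subtype_mk _

end Aux

/-- The map `α : E_i → ⊕_{j≠i} ℝ_{≥0,∞} e_j`, sending the point
`Σ_{j∈I, j≠i} x_j(−η_j^I) ∈ E_i ∩ Λ_I` to `Σ_{j∈I,j≠i} x_j e_j + Σ_{j∉I} ∞·e_j`,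
is a homeomorphism. -/
theorem corner_homeomorph_prod {n : ℕ} [NeZero n] (i : Fin n) :
    ∃ α : corner i ≃ₜ ({j : Fin n // j ≠ i} → ℝ≥0∞),
      ∀ (I : Finset (Fin n)) (hI : I.Nonempty) (hiI : i ∈ I)
        (x : Fin n → ℝ), x i = 0 → (∀ j, 0 ≤ x j) →
        ∀ h : embC I hI (mkC I fun l : ↥I => -(x l)) ∈ corner i,
          α ⟨embC I hI (mkC I fun l : ↥I => -(x l)), h⟩ =
            fun j : {j : Fin n // j ≠ i} =>
              if (j : Fin n) ∈ I then ENNReal.ofReal (x j) else ⊤ := by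
  refine ⟨cornerHomeo i, ?_⟩
  intro I hI hiI x hxi hx h
  classical
  set g : PI n i := fun j => if (j : Fin n) ∈ I then ENNReal.ofReal (x j) else ⊤ with hgdef
  have hgval : ∀ j : {j : Fin n // j ≠ i},
      g j = if (j : Fin n) ∈ I then ENNReal.ofReal (x j) else ⊤ := fun j => rfl
  have hIFs : IFs i g = I := by
    ext l
    rw [mem_IFs]
    by_cases hl : l = i
    · subst hl
      simp [extd_self, hiI]
    · rw [show extd i g l = g ⟨l, hl⟩ from dif_neg hl, hgval]
      by_cases hli : l ∈ I
      · simp [hli]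
      · simp [hli]
  have htF : ∀ l : Fin n, l ∈ I → tF i g l = x l := by
    intro l hlI
    by_cases hl : l = i
    · subst hl; rw [tF_self, hxi]
    · rw [tF, show extd i g l = g ⟨l, hl⟩ from dif_neg hl, hgval, if_pos hlI,
        ENNReal.toReal_ofReal (hx l)]
  have hbg : bMap i g = embC I hI (mkC I fun l : ↥I => -(x l)) := by
    show embC (IFs i g) ⟨i, i_mem_IFs i g⟩ (mkC _ fun l => -(tF i g l.1))
        = embC I hI (mkC I fun l : ↥I => -(x l))
    refine embC_eq_iff.mpr ?_
    refine ⟨hIFs, 0, fun l hl1 hl2 => ?_⟩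
    rw [htF l hl2]
    ring
  have hsub : (⟨embC I hI (mkC I fun l : ↥I => -(x l)), h⟩ : corner i) = eqvFun i g :=
    Subtype.ext hbg.symm
  rw [hsub]
  have : (cornerHomeo i) (eqvFun i g) = (eqvFun i).symm (eqvFun i g) := rfl
  rw [this, Equiv.symm_apply_apply]

end CompApp
end
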